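/- Let $t_0\ge 0$ and let $\Psi:[t_0,\infty)\to[0,\infty)$ be nonincreasing and right-continuous with $\Psi_t\le\Phi_t$ for all $t$, where $\Phi:[t_0,\infty)\to[0,\infty)$ is decreasing, continuously differentiable, $t\mapsto-\dot\Phi_t$ is decreasing, and $\Phi_t/\sqrt{-\dot\Phi_t}\to 0$ as $t\to\infty$. Let $\varphi_s=(-\dot\Phi_s)^{-1/2}$. Then $\int_{t_0}^{\infty}\varphi_s\,d(-\Psi)_s \le \int_{t_0}^{\infty}\sqrt{-\dot\Phi_s}\,ds$, where $d(-\Psi)$ denotes the Lebesgue–Stieltjes measure of $-\Psi$. -/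

import Mathlib

/-!
Layer cake: `∫ φ dμ = ∫₀^∞ μ{φ > λ} dλ`. Since `φ = (-Φ')^{-1/2}` is increasing and continuous,
each superlevel set `{φ > λ} ∩ (t₀, ∞)` is a ray `(c, ∞)`, and on rays `μ` is dominated by the
measure `ν` with density `-Φ'`: `μ (c, ∞) ≤ Ψ c ≤ Φ c = ∫_c^∞ -Φ'`, the last step because `Φ → 0`,
which follows from `Φ/√(-Φ') → 0` and the boundedness of `-Φ'`. Hence
`∫ φ dμ ≤ ∫ φ dν = ∫ φ · (-Φ') = ∫ √(-Φ')`.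
-/

open MeasureTheory Filter Set Topology

theorem Filter.Tendsto.of_div_of_isBoundedUnder {α : Type*} {l : Filter α} {f g : α → ℝ}
    (h : Tendsto (fun x => f x / g x) l (𝓝 0)) (hg : ∀ᶠ x in l, g x ≠ 0)
    (hgb : IsBoundedUnder (· ≤ ·) l fun x => ‖g x‖) : Tendsto f l (𝓝 0) :=
  (h.zero_mul_isBoundedUnder_le hgb).congr' <| hg.mono fun x hx => div_mul_cancel₀ (f x) hx

theorem eq_Ioi_csInf_of_isOpen_of_isUpperSet {α : Type*} [ConditionallyCompleteLinearOrder α]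
    [TopologicalSpace α] [OrderTopology α] [DenselyOrdered α] [NoMinOrder α] {s : Set α}
    (ho : IsOpen s) (hup : IsUpperSet s) (hne : s.Nonempty) (hb : BddBelow s) :
    s = Ioi (sInf s) := by
  refine Subset.antisymm (fun x hx => ?_) fun x hx => ?_
  · obtain ⟨l, hlx, hl⟩ := exists_Ioc_subset_of_mem_nhds (ho.mem_nhds hx) (exists_lt x)
    obtain ⟨y, hly, hyx⟩ := exists_between hlx
    exact (csInf_le hb (hl ⟨hly, hyx.le⟩)).trans_lt hyx
  · obtain ⟨y, hy, hyx⟩ := (csInf_lt_iff hb hne).1 hx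
    exact hup hyx.le hy

theorem measure_Ioi_le_of_forall_measure_Ioc_le {μ : Measure ℝ} {a : ℝ} {C : ENNReal}
    (h : ∀ b, a ≤ b → μ (Ioc a b) ≤ C) : μ (Ioi a) ≤ C := by
  have hlim := tendsto_measure_iUnion_atTop (μ := μ)
    (fun _ _ hbc => Ioc_subset_Ioc_right hbc : Monotone fun b => Ioc a b)
  rw [iUnion_Ioc_right] at hlim
  exact le_of_tendsto hlim ((eventually_ge_atTop a).mono h)

theorem ofReal_eq_lintegral_Ioi_neg_deriv {f f' : ℝ → ℝ} {a : ℝ}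
    (hderiv : ∀ x ∈ Ici a, HasDerivAt f (f' x) x) (hf' : ∀ x ∈ Ioi a, f' x ≤ 0)
    (hf : Tendsto f atTop (𝓝 0)) :
    ENNReal.ofReal (f a) = ∫⁻ x in Ioi a, ENNReal.ofReal (-f' x) := by
  have hderiv' : ∀ x ∈ Ici a, HasDerivAt (-f) (-f' x) x := fun x hx => (hderiv x hx).neg
  have hnonneg : ∀ x ∈ Ioi a, 0 ≤ -f' x := fun x hx => neg_nonneg.2 (hf' x hx)
  have hlim : Tendsto (-f) atTop (𝓝 0) := by
    rw [← neg_zero]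
    exact hf.neg
  rw [← ofReal_integral_eq_lintegral_ofReal
      (integrableOn_Ioi_deriv_of_nonneg' hderiv' hnonneg hlim)
      ((ae_restrict_iff' measurableSet_Ioi).2 (ae_of_all _ hnonneg)),
    integral_Ioi_of_hasDerivAt_of_nonneg' hderiv' hnonneg hlim]
  simp

section TailDomination

variable {μ ν : Measure ℝ} {a : ℝ}

theorem measure_le_of_measure_Ioi_le (h : ∀ c, a ≤ c → μ (Ioi c) ≤ ν (Ioi c)) {s : Set ℝ}
    (ho : IsOpen s) (hup : IsUpperSet s) (hsub : s ⊆ Ioi a) : μ s ≤ ν s := by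
  rcases s.eq_empty_or_nonempty with rfl | hne
  · simp
  have hb : BddBelow s := ⟨a, fun x hx => (hsub hx).le⟩
  rw [eq_Ioi_csInf_of_isOpen_of_isUpperSet ho hup hne hb]
  exact h _ (le_csInf hne fun x hx => (hsub hx).le)

theorem setLIntegral_Ioi_le_of_measure_Ioi_le (h : ∀ c, a ≤ c → μ (Ioi c) ≤ ν (Ioi c))
    {f : ℝ → ℝ} (hmono : MonotoneOn f (Ioi a)) (hcont : ContinuousOn f (Ioi a))
    (hnonneg : ∀ x ∈ Ioi a, 0 ≤ f x) :
    ∫⁻ x in Ioi a, ENNReal.ofReal (f x) ∂μ ≤ ∫⁻ x in Ioi a, ENNReal.ofReal (f x) ∂ν := by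
  have hlayer : ∀ ρ : Measure ℝ, ∫⁻ x in Ioi a, ENNReal.ofReal (f x) ∂ρ =
      ∫⁻ l in Ioi 0, ρ ({x | l < f x} ∩ Ioi a) := fun ρ => by
    rw [lintegral_eq_lintegral_meas_lt _ ((ae_restrict_iff' measurableSet_Ioi).2
      (ae_of_all _ hnonneg)) (hcont.aemeasurable measurableSet_Ioi)]
    simp only [Measure.restrict_apply' measurableSet_Ioi]
  rw [hlayer, hlayer]
  refine lintegral_mono fun l => measure_le_of_measure_Ioi_le h ?_ ?_ inter_subset_right
  · rw [inter_comm]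
    exact hcont.isOpen_inter_preimage isOpen_Ioi isOpen_Ioi
  · rintro x y hxy ⟨hlx, hax⟩
    exact ⟨hlx.trans_le (hmono hax (hax.trans_le hxy) hxy), hax.trans_le hxy⟩

end TailDomination

theorem stieltjes_partial_integration_bound
    (t₀ : ℝ) (Ψ Φ Φ' : ℝ → ℝ)
    -- Ψ is nonnegative, nonincreasing and right-continuous on [t₀, ∞)
    (hΨnonneg : ∀ t, t₀ ≤ t → 0 ≤ Ψ t)
    -- Φ is decreasing and continuously differentiable with derivative Φ' < 0
    (hΦ' : ∀ t, t₀ ≤ t → HasDerivAt Φ (Φ' t) t)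
    (hΦ'cont : ContinuousOn Φ' (Set.Ici t₀))
    (hΦ'neg : ∀ t, t₀ ≤ t → Φ' t < 0)
    -- t ↦ -Φ'(t) is decreasing
    (hΦ'anti : AntitoneOn (fun t => -Φ' t) (Set.Ici t₀))
    -- Φ_t / √(-Φ'_t) → 0
    (hratio : Tendsto (fun t => Φ t / Real.sqrt (-Φ' t)) atTop (nhds 0))
    -- domination Ψ ≤ Φ on [t₀, ∞)
    (hΨΦ : ∀ t, t₀ ≤ t → Ψ t ≤ Φ t)
    -- μ is the Lebesgue–Stieltjes measure of -Ψ on [t₀, ∞)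
    (μ : Measure ℝ)
    (hμ : ∀ a b : ℝ, t₀ ≤ a → a ≤ b → μ (Set.Ioc a b) = ENNReal.ofReal (Ψ a - Ψ b)) :
    (∫⁻ s in Set.Ioi t₀, ENNReal.ofReal ((Real.sqrt (-Φ' s))⁻¹) ∂μ) ≤
      ∫⁻ s in Set.Ioi t₀, ENNReal.ofReal (Real.sqrt (-Φ' s)) := by
  have hsqrt_pos : ∀ t, t₀ ≤ t → 0 < √(-Φ' t) :=
    fun t ht => Real.sqrt_pos.2 (neg_pos.2 (hΦ'neg t ht))
  have hsqrt_anti : AntitoneOn (fun t => √(-Φ' t)) (Ici t₀) :=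
    fun x hx y hy hxy => Real.sqrt_le_sqrt (hΦ'anti hx hy hxy)
  have hΦlim : Tendsto Φ atTop (𝓝 0) := by
    refine hratio.of_div_of_isBoundedUnder ?_ (isBoundedUnder_of_eventually_le (a := √(-Φ' t₀)) ?_)
    all_goals filter_upwards [eventually_ge_atTop t₀] with t ht
    · exact (hsqrt_pos t ht).ne'
    · rw [Real.norm_of_nonneg (Real.sqrt_nonneg _)]
      exact hsqrt_anti self_mem_Ici ht ht
  set ν := volume.withDensity fun u => ENNReal.ofReal (-Φ' u)
  have htail : ∀ c, t₀ ≤ c → μ (Ioi c) ≤ ν (Ioi c) := fun c hc => calc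
    μ (Ioi c) ≤ ENNReal.ofReal (Φ c) := measure_Ioi_le_of_forall_measure_Ioc_le fun b hcb => by
        rw [hμ c b hc hcb]
        exact ENNReal.ofReal_le_ofReal (by linarith [hΨnonneg b (hc.trans hcb), hΨΦ c hc])
    _ = ∫⁻ u in Ioi c, ENNReal.ofReal (-Φ' u) := ofReal_eq_lintegral_Ioi_neg_deriv
        (fun x hx => hΦ' x (hc.trans hx)) (fun x hx => (hΦ'neg x (hc.trans hx.le)).le) hΦlim
    _ = ν (Ioi c) := (withDensity_apply _ measurableSet_Ioi).symm
  have hcont : ContinuousOn (fun s => -Φ' s) (Ioi t₀) := (hΦ'cont.mono Ioi_subset_Ici_self).neg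
  calc (∫⁻ s in Ioi t₀, ENNReal.ofReal ((√(-Φ' s))⁻¹) ∂μ)
      ≤ ∫⁻ s in Ioi t₀, ENNReal.ofReal ((√(-Φ' s))⁻¹) ∂ν := by
        refine setLIntegral_Ioi_le_of_measure_Ioi_le htail ?_ ?_ fun _ _ => by positivity
        · exact fun x hx y hy hxy => inv_anti₀ (hsqrt_pos y (le_of_lt hy))
            (hsqrt_anti (Ioi_subset_Ici_self hx) (Ioi_subset_Ici_self hy) hxy)
        · exact hcont.sqrt.inv₀ fun x hx => (hsqrt_pos x (le_of_lt hx)).ne'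
    _ = ∫⁻ s in Ioi t₀, ENNReal.ofReal (-Φ' s) * ENNReal.ofReal ((√(-Φ' s))⁻¹) :=
        setLIntegral_withDensity_eq_setLIntegral_mul_non_measurable₀ _
          (hcont.aemeasurable measurableSet_Ioi).ennreal_ofReal _ measurableSet_Ioi
          (ae_of_all _ fun _ => ENNReal.ofReal_lt_top)
    _ = ∫⁻ s in Ioi t₀, ENNReal.ofReal (√(-Φ' s)) := by
        refine lintegral_congr fun s => ?_
        rw [← ENNReal.ofReal_mul' (by positivity), ← div_eq_mul_inv, Real.div_sqrt]
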